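/- arXiv:1710.11081 — 2 statements merged into one kernel-verified Lean document; each statement's English description precedes it below -/
import Mathlib

section
/- Let H be a normal subgroup of G and let p ∈ Ultrafilter G be H-invariant. If q, q' ∈ Ultrafilter G have the same pushforward under the quotient map G → G/H, then q * p = q' * p. -/
/-- The semigroup operation on ultrafilters over a type with multiplication:
`A ∈ umul p q ↔ {a | {b | a * b ∈ A} ∈ q} ∈ p`. -/
def umul {G : Type*} [Mul G] (p q : Ultrafilter G) : Ultrafilter G :=
  p.bind fun a => q.map (a * ·)

/-- Let `H ⊴ G` and let `p : Ultrafilter G` be `H`-invariant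
(invariant under pushforward by left multiplication by each `h ∈ H`). If
`q, q' : Ultrafilter G` have the same pushforward under the quotient map
`G → G/H`, then `q * p = q' * p`. -/
theorem stmt9 {G : Type*} [Group G] (H : Subgroup G) [H.Normal]
    (p : Ultrafilter G) (hp : ∀ h ∈ H, p.map (fun x => h * x) = p)
    (q q' : Ultrafilter G)
    (hqq' : q.map (QuotientGroup.mk : G → G ⧸ H) = q'.map (QuotientGroup.mk : G → G ⧸ H)) :
    umul q p = umul q' p := by
  ext A
  have hmem : ∀ r : Ultrafilter G, A ∈ umul r p ↔ {a | (a * ·) ⁻¹' A ∈ p} ∈ r := by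
    intro r
    rfl
  set S : Set G := {a | (a * ·) ⁻¹' A ∈ p} with hS
  -- S is right-H-saturated
  have hsat : (QuotientGroup.mk : G → G ⧸ H) ⁻¹' ((QuotientGroup.mk : G → G ⧸ H) '' S) = S := by
    apply subset_antisymm
    · rintro a ⟨b, hb, hab⟩
      have h : b⁻¹ * a ∈ H := QuotientGroup.eq.mp hab
      have key := hp _ h
      have : ((fun x => (b⁻¹ * a) * x) ⁻¹' ((b * ·) ⁻¹' A)) ∈ p := by
        rw [← Ultrafilter.mem_map, key]; exact hb
      have heq : ((fun x => (b⁻¹ * a) * x) ⁻¹' ((b * ·) ⁻¹' A)) = (a * ·) ⁻¹' A := by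
        ext x; simp [Set.mem_preimage, mul_assoc]
      rwa [heq] at this
    · exact Set.subset_preimage_image _ _
  rw [hmem, hmem, ← hsat]
  have h1 : (QuotientGroup.mk : G → G ⧸ H) ⁻¹' ((QuotientGroup.mk : G → G ⧸ H) '' S) ∈ q ↔
      (QuotientGroup.mk : G → G ⧸ H) '' S ∈ q.map QuotientGroup.mk := Ultrafilter.mem_map.symm
  have h2 : (QuotientGroup.mk : G → G ⧸ H) ⁻¹' ((QuotientGroup.mk : G → G ⧸ H) '' S) ∈ q' ↔
      (QuotientGroup.mk : G → G ⧸ H) '' S ∈ q'.map QuotientGroup.mk := Ultrafilter.mem_map.symm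
  rw [h1, h2, hqq']
end

section
/- Define π_K : G → K by letting π_K(g) be the unique k ∈ K with g ∈ k·H. Then for all q, q' ∈ Ultrafilter G with K ∈ q and H ∈ q': Ultrafilter.map π_K (q * q') = Ultrafilter.map π_K q. -/
/-- Let `G = KH` be an exact factorization and let `π_K : G → K`
send `g` to the unique `k ∈ K` with `g ∈ k·H`. Then for all `q, q' : Ultrafilter G`
with `K ∈ q` and `H ∈ q'`: `Ultrafilter.map π_K (q * q') = Ultrafilter.map π_K q`. -/
theorem stmt13 {G : Type*} [Group G] (K H : Subgroup G)
    (hdisj : K ⊓ H = ⊥)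
    (hfact : ∀ g : G, ∃ k ∈ K, ∃ h ∈ H, g = k * h)
    (πK : G → K) (hπ : ∀ g : G, ∃ h ∈ H, g = (πK g : G) * h)
    (q q' : Ultrafilter G) (hq : (K : Set G) ∈ q) (hq' : (H : Set G) ∈ q') :
    (umul q q').map πK = q.map πK := by
  -- key: for a ∈ K, b ∈ H, the coercion of πK (a*b) equals a
  have key : ∀ a ∈ K, ∀ b ∈ H, (πK (a * b) : G) = a := by
    intro a ha b hb
    obtain ⟨h, hh, heq⟩ := hπ (a * b)
    have h1 : (πK (a * b) : G) = a * b * h⁻¹ := by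
      rw [eq_mul_inv_iff_mul_eq]; exact heq.symm
    have hx : a⁻¹ * (πK (a * b) : G) ∈ K ⊓ H := by
      constructor
      · exact K.mul_mem (K.inv_mem ha) (πK (a * b)).2
      · have h2 : a⁻¹ * (πK (a * b) : G) = b * h⁻¹ := by rw [h1]; group
        rw [h2]; exact H.mul_mem hb (H.inv_mem hh)
    rw [hdisj, Subgroup.mem_bot] at hx
    exact (inv_mul_eq_one.mp hx).symm
  have key2 : ∀ a ∈ K, ∀ b ∈ H, πK (a * b) = πK a := by
    intro a ha b hb
    apply Subtype.ext
    rw [key a ha b hb]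
    have := key a ha 1 H.one_mem
    rw [mul_one] at this
    exact this.symm
  have hiff : ∀ A : Set K, (A ∈ (umul q q').map πK ↔ A ∈ q.map πK) := by
    intro A
    have hmem : A ∈ (umul q q').map πK ↔
        {a | {b | πK (a * b) ∈ A} ∈ q'} ∈ q := by
      rfl
    rw [hmem, Ultrafilter.mem_map]
    constructor
    · intro hA
      have : (K : Set G) ∩ {a | {b | πK (a * b) ∈ A} ∈ q'} ∈ q := q.inter_mem hq hA
      apply q.sets_of_superset this
      rintro a ⟨ha, hset⟩
      have : (H : Set G) ∩ {b | πK (a * b) ∈ A} ∈ q' := q'.inter_mem hq' hset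
      obtain ⟨b, hbH, hbA⟩ := q'.nonempty_of_mem this
      have : πK a ∈ A := by rw [← key2 a ha b hbH]; exact hbA
      exact this
    · intro hA
      have : (K : Set G) ∩ πK ⁻¹' A ∈ q := q.inter_mem hq hA
      apply q.sets_of_superset this
      rintro a ⟨ha, haA⟩
      apply q'.sets_of_superset hq'
      intro b hb
      show πK (a * b) ∈ A
      rw [key2 a ha b hb]
      exact haA
  exact Ultrafilter.coe_injective (Filter.ext hiff)
end
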